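/- Uniform-in-time convergence by contradiction: let θ_k, θ : [0,T] → L²(T²) be such that (i) θ_k → θ in C([0,T]; L²_w) (i.e. for every test function φ ∈ L², sup_t |⟨θ_k(t) − θ(t), φ⟩| → 0), (ii) limsup_k sup_t (‖θ_k(t)‖_{L²} − ‖θ(t)‖_{L²}) ≤ 0, and (iii) t ↦ ‖θ(t)‖_{L²} is continuous and θ ∈ C([0,T]; L²_w). Then sup_t ‖θ_k(t) − θ(t)‖_{L²} → 0 as k → ∞. -/

import Mathlib

open MeasureTheory Filter Topology Set

noncomputable section

/-- The two-dimensional torus. -/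
abbrev T2 : Type := UnitAddCircle × UnitAddCircle

/-!
Expanding `‖θ_k - θ‖² = (‖θ_k‖ - ‖θ‖)(‖θ_k‖ + ‖θ‖) - 2⟪θ_k - θ, θ⟫`, the first term is uniformly
small by the limsup hypothesis. For the second, `θ` is strongly continuous (weak continuity plus
continuity of the norm), so `θ([0,T])` is compact; weak convergence is uniform against the points
of a finite net of this compact set, and, `θ_k - θ` being uniformly bounded, against all its points.
-/

open RealInnerProductSpace

variable {E : Type*} [NormedAddCommGroup E] [InnerProductSpace ℝ E]

theorem continuousWithinAt_of_inner_of_norm {α : Type*} [TopologicalSpace α] {g : α → E}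
    {S : Set α} {s : α} (hinner : ContinuousWithinAt (fun t => ⟪g t, g s⟫) S s)
    (hnorm : ContinuousWithinAt (fun t => ‖g t‖) S s) : ContinuousWithinAt g S s := by
  have hsq : Tendsto (fun t => ‖g t - g s‖ ^ 2) (𝓝[S] s) (𝓝 0) := by
    have h : Tendsto (fun t => ‖g t‖ ^ 2 - 2 * ⟪g t, g s⟫ + ‖g s‖ ^ 2) (𝓝[S] s)
        (𝓝 (‖g s‖ ^ 2 - 2 * ⟪g s, g s⟫ + ‖g s‖ ^ 2)) :=
      ((hnorm.pow 2).sub (hinner.const_mul 2)).add tendsto_const_nhds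
    rw [real_inner_self_eq_norm_sq, show ‖g s‖ ^ 2 - 2 * ‖g s‖ ^ 2 + ‖g s‖ ^ 2 = 0 by ring] at h
    simpa only [norm_sub_sq_real] using h
  have h := (Real.continuous_sqrt.tendsto 0).comp hsq
  simp only [Function.comp_def, Real.sqrt_sq (norm_nonneg _), Real.sqrt_zero] at h
  exact tendsto_iff_norm_sub_tendsto_zero.2 h

theorem eventually_abs_inner_le_of_totallyBounded {ι α : Type*} {l : Filter ι} {h : ι → α → E}
    {S : Set α} {K : Set E} {C : ℝ} (hC : ∀ᶠ k in l, ∀ t ∈ S, ‖h k t‖ ≤ C)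
    (hweak : ∀ φ : E, ∀ ε > 0, ∀ᶠ k in l, ∀ t ∈ S, |⟪h k t, φ⟫| ≤ ε)
    (hK : TotallyBounded K) {ε : ℝ} (hε : 0 < ε) :
    ∀ᶠ k in l, ∀ t ∈ S, ∀ y ∈ K, |⟪h k t, y⟫| ≤ ε := by
  set δ := ε / (2 * (|C| + 1))
  obtain ⟨net, hnet, hcover⟩ := Metric.totallyBounded_iff.1 hK δ (by positivity)
  have hnetweak : ∀ᶠ k in l, ∀ z ∈ net, ∀ t ∈ S, |⟪h k t, z⟫| ≤ ε / 2 :=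
    hnet.eventually_all.2 fun z _ => hweak z _ (half_pos hε)
  filter_upwards [hC, hnetweak] with k hCk hk t ht y hy
  obtain ⟨z, hz, hyz⟩ := mem_iUnion₂.1 (hcover hy)
  rw [Metric.mem_ball, dist_eq_norm] at hyz
  calc |⟪h k t, y⟫| = |⟪h k t, z⟫ + ⟪h k t, y - z⟫| := by rw [← inner_add_right, add_sub_cancel]
    _ ≤ |⟪h k t, z⟫| + ‖h k t‖ * ‖y - z‖ :=
      (abs_add_le _ _).trans (by gcongr; exact abs_real_inner_le_norm _ _)
    _ ≤ ε / 2 + (|C| + 1) * δ := by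
      gcongr
      · exact hk z hz t ht
      · linarith [hCk t ht, le_abs_self C]
    _ = ε := by simp only [δ]; field_simp; ring

theorem norm_sub_sq_le_of_norm_sub_norm_le (x y : E) {η : ℝ} (h : ‖x‖ - ‖y‖ ≤ η) :
    ‖x - y‖ ^ 2 ≤ η * (‖x‖ + ‖y‖) + 2 * |⟪x - y, y⟫| := by
  have hexp : ‖x - y‖ ^ 2 = (‖x‖ - ‖y‖) * (‖x‖ + ‖y‖) - 2 * ⟪x - y, y⟫ := by
    rw [norm_sub_sq_real, inner_sub_left, real_inner_self_eq_norm_sq]; ring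
  rw [hexp]
  linarith [neg_abs_le ⟪x - y, y⟫,
    mul_le_mul_of_nonneg_right h (add_nonneg (norm_nonneg x) (norm_nonneg y))]

theorem eventually_norm_sub_le_of_weak_of_limsup_norm {ι α : Type*} [TopologicalSpace α]
    {l : Filter ι} {f : ι → α → E} {g : α → E} {S : Set α} (hS : IsCompact S)
    (hg : ContinuousOn g S)
    (hweak : ∀ φ : E, ∀ ε > 0, ∀ᶠ k in l, ∀ t ∈ S, |⟪f k t - g t, φ⟫| ≤ ε)
    (hnorm : ∀ ε > 0, ∀ᶠ k in l, ∀ t ∈ S, ‖f k t‖ - ‖g t‖ ≤ ε) {ε : ℝ} (hε : 0 < ε) :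
    ∀ᶠ k in l, ∀ t ∈ S, ‖f k t - g t‖ ≤ ε := by
  obtain ⟨M, hM⟩ := hS.exists_bound_of_continuousOn hg
  set C := 2 * |M| + 1
  have hC : 0 < C := by positivity
  have hbound : ∀ᶠ k in l, ∀ t ∈ S, ‖f k t‖ + ‖g t‖ ≤ C := by
    filter_upwards [hnorm 1 one_pos] with k hk t ht
    linarith [hk t ht, hM t ht, le_abs_self M]
  have hinner := eventually_abs_inner_le_of_totallyBounded (h := fun k t => f k t - g t)
    (hbound.mono fun k hk t ht => (norm_sub_le _ _).trans (hk t ht)) hweak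
    (hS.image_of_continuousOn hg).totallyBounded (ε := ε ^ 2 / 4) (by positivity)
  filter_upwards [hbound, hinner, hnorm (ε ^ 2 / (2 * C)) (by positivity)] with k hCk hik hnk t ht
  have hsq : ‖f k t - g t‖ ^ 2 ≤ ε ^ 2 := calc
    _ ≤ ε ^ 2 / (2 * C) * (‖f k t‖ + ‖g t‖) + 2 * |⟪f k t - g t, g t⟫| :=
      norm_sub_sq_le_of_norm_sub_norm_le _ _ (hnk t ht)
    _ ≤ ε ^ 2 / (2 * C) * C + 2 * (ε ^ 2 / 4) := by
      gcongr
      exacts [hCk t ht, hik t ht _ (mem_image_of_mem g ht)]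
    _ = ε ^ 2 := by field_simp; ring
  exact (pow_le_pow_iff_left₀ (norm_nonneg _) hε.le two_ne_zero).1 hsq

theorem stmt_4_general (T : ℝ)
    (θk : ℕ → ℝ → Lp ℝ 2 (volume : Measure T2)) (θ : ℝ → Lp ℝ 2 (volume : Measure T2))
    (hweak : ∀ φ : Lp ℝ 2 (volume : Measure T2), ∀ ε > 0, ∃ N, ∀ k ≥ N, ∀ t ∈ Icc 0 T,
      |(inner ℝ (θk k t - θ t) φ : ℝ)| ≤ ε)
    (hlimsup : ∀ ε > 0, ∃ N, ∀ k ≥ N, ∀ t ∈ Icc 0 T, ‖θk k t‖ - ‖θ t‖ ≤ ε)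
    (hnormcont : ContinuousOn (fun t => ‖θ t‖) (Icc 0 T))
    (hweakcont : ∀ φ : Lp ℝ 2 (volume : Measure T2),
      ContinuousOn (fun t => (inner ℝ (θ t) φ : ℝ)) (Icc 0 T)) :
    ∀ ε > 0, ∃ N, ∀ k ≥ N, ∀ t ∈ Icc 0 T, ‖θk k t - θ t‖ ≤ ε := by
  intro ε hε
  have hθ : ContinuousOn θ (Icc 0 T) := fun s hs =>
    continuousWithinAt_of_inner_of_norm (hweakcont (θ s) s hs) (hnormcont s hs)
  exact eventually_atTop.1 <| eventually_norm_sub_le_of_weak_of_limsup_norm isCompact_Icc hθ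
    (fun φ ε hε => eventually_atTop.2 (hweak φ ε hε))
    (fun ε hε => eventually_atTop.2 (hlimsup ε hε)) hε

/-- Uniform-in-time convergence by contradiction: if `θ_k → θ` in
`C([0,T]; L²_w)` (uniform-in-time weak convergence), `limsup_k sup_t (‖θ_k(t)‖ − ‖θ(t)‖) ≤ 0`,
the norm `t ↦ ‖θ(t)‖` is continuous and `θ ∈ C([0,T]; L²_w)`, then
`sup_t ‖θ_k(t) − θ(t)‖ → 0`. -/
theorem stmt_4 (T : ℝ) (hT : 0 < T)
    (θk : ℕ → ℝ → Lp ℝ 2 (volume : Measure T2)) (θ : ℝ → Lp ℝ 2 (volume : Measure T2))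
    (hweak : ∀ φ : Lp ℝ 2 (volume : Measure T2), ∀ ε > 0, ∃ N, ∀ k ≥ N, ∀ t ∈ Icc 0 T,
      |(inner ℝ (θk k t - θ t) φ : ℝ)| ≤ ε)
    (hlimsup : ∀ ε > 0, ∃ N, ∀ k ≥ N, ∀ t ∈ Icc 0 T, ‖θk k t‖ - ‖θ t‖ ≤ ε)
    (hnormcont : ContinuousOn (fun t => ‖θ t‖) (Icc 0 T))
    (hweakcont : ∀ φ : Lp ℝ 2 (volume : Measure T2),
      ContinuousOn (fun t => (inner ℝ (θ t) φ : ℝ)) (Icc 0 T)) :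
    ∀ ε > 0, ∃ N, ∀ k ≥ N, ∀ t ∈ Icc 0 T, ‖θk k t - θ t‖ ≤ ε :=
  stmt_4_general T θk θ hweak hlimsup hnormcont hweakcont
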